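/- Let k ≥ 2 and let (Σ_k, σ) be the k-symbol full shift. Then the set Rec(Σ_k) \ BR(Σ_k) of points that are recurrent but not Banach recurrent is dense in Σ_k and contains an uncountable DC1-scrambled subset. -/

import Mathlib

open Filter Topology MeasureTheory

/-- Upper density of a set of naturals. -/
noncomputable def upperDensity (S : Set ℕ) : ℝ :=
  Filter.limsup (fun n => ((S ∩ Set.Iio n).ncard : ℝ) / n) Filter.atTop

/-- Lower density of a set of naturals. -/
noncomputable def lowerDensity (S : Set ℕ) : ℝ :=
  Filter.liminf (fun n => ((S ∩ Set.Iio n).ncard : ℝ) / n) Filter.atTop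

/-- Banach upper density: limsup over the interval length of the maximal
proportion of `S` in an interval of that length. -/
noncomputable def banachUpperDensity (S : Set ℕ) : ℝ :=
  Filter.limsup (fun N => ⨆ a : ℕ, ((S ∩ Set.Ico a (a + N)).ncard : ℝ) / N) Filter.atTop

/-- Banach lower density. -/
noncomputable def banachLowerDensity (S : Set ℕ) : ℝ :=
  Filter.liminf (fun N => ⨅ a : ℕ, ((S ∩ Set.Ico a (a + N)).ncard : ℝ) / N) Filter.atTop

/-- The shift map on the full shift `Σ_k = {0, …, k-1}^ℕ`. -/
def shift {k : ℕ} (x : ℕ → Fin k) : ℕ → Fin k := fun n => x (n + 1)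

/-- The metric `d(x,y) = Σ_{n ≥ 1} δ(x_n, y_n)/2^n` on `Σ_k` (sequences indexed from `0`). -/
noncomputable def shiftDist {k : ℕ} (x y : ℕ → Fin k) : ℝ :=
  ∑' n : ℕ, if x n = y n then 0 else (1 / 2) ^ (n + 1)

/-- The open ball `B_ε(x)` for the metric `shiftDist`. -/
def sball {k : ℕ} (x : ℕ → Fin k) (ε : ℝ) : Set (ℕ → Fin k) := {y | shiftDist x y < ε}

/-- `N(x, U) = {n ≥ 1 : σ^n(x) ∈ U}`. -/
def visits {k : ℕ} (x : ℕ → Fin k) (U : Set (ℕ → Fin k)) : Set ℕ :=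
  {n | 1 ≤ n ∧ shift^[n] x ∈ U}

/-- A point is recurrent if `N(x, B_ε(x)) ≠ ∅` for every `ε > 0`. -/
def Recurrent {k : ℕ} (x : ℕ → Fin k) : Prop := ∀ ε > (0 : ℝ), (visits x (sball x ε)).Nonempty

/-- A point is Banach recurrent if `N(x, B_ε(x))` has positive Banach upper density
for every `ε > 0`. -/
def BanachRecurrent {k : ℕ} (x : ℕ → Fin k) : Prop :=
  ∀ ε > (0 : ℝ), 0 < banachUpperDensity (visits x (sball x ε))

/-- Statistical ω-limit set w.r.t. a density notion `ξ`:
`ω_ξ(x) = {y : ξ(N(x, B_ε(y))) > 0 for all ε > 0}`. -/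
def statOmega {k : ℕ} (ξ : Set ℕ → ℝ) (x : ℕ → Fin k) : Set (ℕ → Fin k) :=
  {y | ∀ ε > (0 : ℝ), 0 < ξ (visits x (sball y ε))}

/-- The usual ω-limit set of `x` under the shift. -/
def omegaLim {k : ℕ} (x : ℕ → Fin k) : Set (ℕ → Fin k) :=
  {y | ∀ ε > (0 : ℝ), ∀ N : ℕ, ∃ n ≥ N, shift^[n] x ∈ sball y ε}

/-- Density of a subset of `Σ_k` w.r.t. the metric `shiftDist`. -/
def ShiftDense {k : ℕ} (A : Set (ℕ → Fin k)) : Prop :=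
  ∀ x : ℕ → Fin k, ∀ ε > (0 : ℝ), ∃ y ∈ A, shiftDist x y < ε

/-- Closure of a subset of `Σ_k` w.r.t. the metric `shiftDist`. -/
def shiftClosure {k : ℕ} (A : Set (ℕ → Fin k)) : Set (ℕ → Fin k) :=
  {z | ∀ ε > (0 : ℝ), ∃ y ∈ A, shiftDist z y < ε}

/-- `Φ^{(n)}_{xy}(t)`: the proportion of times `0 ≤ i < n` with `d(σ^i x, σ^i y) < t`. -/
noncomputable def PhiN {k : ℕ} (x y : ℕ → Fin k) (n : ℕ) (t : ℝ) : ℝ :=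
  (({i | i < n ∧ shiftDist (shift^[i] x) (shift^[i] y) < t}).ncard : ℝ) / n

/-- A pair is DC1 (distributionally chaotic of type 1) if `Φ_{xy}(s) = 0` for some `s > 0`
and `Φ*_{xy}(t) = 1` for all `t > 0`. -/
def DC1Pair {k : ℕ} (x y : ℕ → Fin k) : Prop :=
  (∃ s > (0 : ℝ), Filter.liminf (fun n => PhiN x y n s) Filter.atTop = 0) ∧
  (∀ t > (0 : ℝ), Filter.limsup (fun n => PhiN x y n t) Filter.atTop = 1)

/-- A set with at least two points is DC1-scrambled if every pair of distinct points is DC1. -/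
def DC1Scrambled {k : ℕ} (S : Set (ℕ → Fin k)) : Prop :=
  S.Nontrivial ∧ ∀ x ∈ S, ∀ y ∈ S, x ≠ y → DC1Pair x y

/-- `strictOrEq true A B` means `A ⊊ B`; `strictOrEq false A B` means `A = B`. -/
def strictOrEq {α : Type*} (b : Bool) (A B : Set α) : Prop := if b then A ⊂ B else A = B

/-- The patterns of (strict ⊊ = `true` / equality = `false`) for the three inclusions
`ω_{B_*} ⊆ ω_{d̲} ⊆ ω_{d̄} ⊆ ω_{B*}` in Cases (1)–(6). -/
def caseFlags : Fin 6 → Bool × Bool × Bool :=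
  ![(true, false, false), (true, false, true), (false, true, false),
    (true, true, false), (false, true, true), (true, true, true)]

/-- `x` satisfies Case (i), i = 1,…,6: the chain
`ω_{B_*}(x) ⊆ ω_{d̲}(x) ⊆ ω_{d̄}(x) ⊆ ω_{B*}(x) = ω_σ(x)` with strictness pattern given by
`caseFlags i`, and the last inclusion an equality. -/
def SatCase {k : ℕ} (i : Fin 6) (x : ℕ → Fin k) : Prop :=
  strictOrEq (caseFlags i).1 (statOmega banachLowerDensity x) (statOmega lowerDensity x) ∧
  strictOrEq (caseFlags i).2.1 (statOmega lowerDensity x) (statOmega upperDensity x) ∧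
  strictOrEq (caseFlags i).2.2 (statOmega upperDensity x) (statOmega banachUpperDensity x) ∧
  statOmega banachUpperDensity x = omegaLim x

/-- `x` satisfies Case (i'), i = 1,…,6: as in Case (i) but the last inclusion
`ω_{B*}(x) ⊆ ω_σ(x)` is strict. -/
def SatCase' {k : ℕ} (i : Fin 6) (x : ℕ → Fin k) : Prop :=
  strictOrEq (caseFlags i).1 (statOmega banachLowerDensity x) (statOmega lowerDensity x) ∧
  strictOrEq (caseFlags i).2.1 (statOmega lowerDensity x) (statOmega upperDensity x) ∧
  strictOrEq (caseFlags i).2.2 (statOmega upperDensity x) (statOmega banachUpperDensity x) ∧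
  statOmega banachUpperDensity x ⊂ omegaLim x

/-!
The witnesses are limits of nested blocks: `B₀ = w` has length `m`, and
`B_{t+1} = B_t f_t ^ g_t B_t` with a constant gap of length `g_t = (t + 4) |B_t|`. Shifting by the
period `|B_t| + g_t` reproduces `B_t`, so the limit point is recurrent. If the last symbol of `w`
differs from `f₀`, a return close enough to the point can only start at a sum of distinct periods,
and these sums are so sparse (an interval of length at most `g_n` contains at most `2 ^ n` of
them) that the return times have Banach density zero. Choosing `w` freely gives density.

For the scrambled set the gap symbols encode a bit sequence `c` on the levels `2 ^ l` and are `0`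
elsewhere. At the end of a gap at which the codes of `c ≠ c'` differ, the two points have been far
apart most of the time; at the end of a long run of uncoded levels, the number of mismatches has
only doubled per level while the block length has grown much faster, so they have been close most
of the time.
-/

namespace FullShift

section Metric

variable {k : ℕ}

lemma shift_iterate_apply (n : ℕ) (x : ℕ → Fin k) (i : ℕ) : shift^[n] x i = x (i + n) := by
  induction n generalizing x with
  | zero => rfl
  | succ n ih => rw [Function.iterate_succ_apply, ih]; rfl

lemma summable_ite_half_pow (p : ℕ → Prop) [DecidablePred p] :
    Summable fun n => if p n then (0 : ℝ) else (1 / 2) ^ (n + 1) :=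
  (summable_geometric_two.mul_left (1 / 2)).of_nonneg_of_le (fun n => by positivity)
    fun n => by split_ifs <;> simp [pow_succ, mul_comm]

lemma half_pow_le_shiftDist {x y : ℕ → Fin k} {j : ℕ} (h : x j ≠ y j) :
    (1 / 2 : ℝ) ^ (j + 1) ≤ shiftDist x y := by
  simpa [shiftDist, h] using (summable_ite_half_pow fun n => x n = y n).le_tsum j fun n _ => by positivity

lemma shiftDist_le_half_pow {x y : ℕ → Fin k} {L : ℕ} (h : ∀ i < L, x i = y i) :
    shiftDist x y ≤ (1 / 2 : ℝ) ^ L := by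
  have htail : (fun n => if n < L then 0 else (1 / 2 : ℝ) ^ (n + 1)) =
      fun n => 2⁻¹ * if L ≤ n then (2⁻¹ : ℝ) ^ n else 0 := by
    ext n; split_ifs <;> first | omega | simp [pow_succ, mul_comm]
  calc shiftDist x y ≤ ∑' n, if n < L then 0 else (1 / 2 : ℝ) ^ (n + 1) := by
        refine (summable_ite_half_pow fun n => x n = y n).tsum_le_tsum (fun n => ?_)
          (summable_ite_half_pow (· < L))
        by_cases hn : n < L
        · rw [if_pos (h n hn), if_pos hn]
        · rw [if_neg hn]; split_ifs <;> norm_num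
    _ = (1 / 2) ^ L := by
        rw [htail, tsum_mul_left, tsum_geometric_inv_two_ge]; simp

lemma eq_of_shiftDist_lt_half_pow {x y : ℕ → Fin k} {L : ℕ} (h : shiftDist x y < (1 / 2 : ℝ) ^ L)
    {i : ℕ} (hi : i < L) : x i = y i := by
  by_contra hne
  have := (pow_le_pow_of_le_one (by norm_num) (by norm_num) hi).trans (half_pow_le_shiftDist hne)
  linarith

end Metric

section Frequencies

variable {k : ℕ}

lemma limsup_eq_one_of_tendsto {u : ℕ → ℝ} (h0 : ∀ n, 0 ≤ u n) (h1 : ∀ n, u n ≤ 1)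
    {φ : ℕ → ℕ} (hφ : Tendsto φ atTop atTop) {b : ℕ → ℝ} (hb : Tendsto b atTop (𝓝 0))
    (hub : ∀ e, 1 - b e ≤ u (φ e)) : limsup u atTop = 1 := by
  have hbdd : IsBoundedUnder (· ≤ ·) atTop u := isBoundedUnder_of ⟨1, h1⟩
  refine le_antisymm (limsup_le_of_le (isCoboundedUnder_le_of_le atTop h0) (.of_forall h1)) ?_
  have hlim : Tendsto (u ∘ φ) atTop (𝓝 1) :=
    tendsto_of_tendsto_of_tendsto_of_le_of_le (by simpa using tendsto_const_nhds.sub hb)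
      tendsto_const_nhds hub fun e => h1 _
  calc (1 : ℝ) = limsup u (map φ atTop) := by rw [← limsup_comp]; exact hlim.limsup_eq.symm
    _ ≤ limsup u atTop := limsup_le_limsup_of_le hφ (isCoboundedUnder_le_of_le _ h0) hbdd

lemma liminf_eq_zero_of_tendsto {u : ℕ → ℝ} (h0 : ∀ n, 0 ≤ u n) (h1 : ∀ n, u n ≤ 1)
    {φ : ℕ → ℕ} (hφ : Tendsto φ atTop atTop) {b : ℕ → ℝ} (hb : Tendsto b atTop (𝓝 0))
    (hub : ∀ e, u (φ e) ≤ b e) : liminf u atTop = 0 := by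
  have hbdd : IsBoundedUnder (· ≥ ·) atTop u := isBoundedUnder_of ⟨0, h0⟩
  refine le_antisymm ?_ (le_liminf_of_le (isCoboundedUnder_ge_of_le atTop h1) (.of_forall h0))
  have hlim : Tendsto (u ∘ φ) atTop (𝓝 0) :=
    tendsto_of_tendsto_of_tendsto_of_le_of_le tendsto_const_nhds hb (fun e => h0 _) hub
  calc liminf u atTop ≤ liminf u (map φ atTop) :=
        liminf_le_liminf_of_le hφ hbdd (isCoboundedUnder_ge_of_le _ h1)
    _ = 0 := by rw [← liminf_comp]; exact hlim.liminf_eq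

lemma PhiN_nonneg (x y : ℕ → Fin k) (n : ℕ) (t : ℝ) : 0 ≤ PhiN x y n t := by
  unfold PhiN; positivity

lemma PhiN_le_div {x y : ℕ → Fin k} {n a : ℕ} {t : ℝ}
    (h : ∀ i < n, a ≤ i → t ≤ shiftDist (shift^[i] x) (shift^[i] y)) :
    PhiN x y n t ≤ a / n := by
  have hsub : {i | i < n ∧ shiftDist (shift^[i] x) (shift^[i] y) < t} ⊆ Set.Iio a :=
    fun i ⟨hi, hlt⟩ => not_le.1 fun ha => (h i hi ha).not_gt hlt
  unfold PhiN
  gcongr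
  simpa using Set.ncard_le_ncard hsub (Set.finite_Iio a)

lemma PhiN_le_one (x y : ℕ → Fin k) (n : ℕ) (t : ℝ) : PhiN x y n t ≤ 1 := by
  rcases n.eq_zero_or_pos with rfl | hn
  · simp [PhiN]
  · exact (PhiN_le_div fun i hi hni => absurd hi (not_lt.2 hni)).trans_eq (div_self (by positivity))

def mismatches {α : Type*} [DecidableEq α] (x y : ℕ → α) (n : ℕ) : ℕ :=
  ((Finset.range n).filter fun i => x i ≠ y i).card

lemma mismatches_add {α : Type*} [DecidableEq α] (x y : ℕ → α) (n r : ℕ) :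
    mismatches x y (n + r) =
      mismatches x y n + ((Finset.range r).filter fun i => x (n + i) ≠ y (n + i)).card := by
  simp only [mismatches, Finset.card_filter, Finset.sum_range_add]

lemma mismatches_le {α : Type*} [DecidableEq α] (x y : ℕ → α) (n : ℕ) : mismatches x y n ≤ n :=
  (Finset.card_filter_le _ _).trans_eq (Finset.card_range n)

lemma mismatches_add_le {α : Type*} [DecidableEq α] (x y : ℕ → α) (n r : ℕ) :
    mismatches x y (n + r) ≤ mismatches x y n + r :=
  (mismatches_add x y n r).trans_le
    (Nat.add_le_add_left ((Finset.card_filter_le _ _).trans_eq (Finset.card_range r)) _)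

lemma card_filter_shifted_ne_le_mismatches {α : Type*} [DecidableEq α] (x y : ℕ → α)
    {n q r : ℕ} (hq : q ≤ r) :
    ((Finset.range n).filter fun i => x (i + q) ≠ y (i + q)).card ≤ mismatches x y (n + r) :=
  Finset.card_le_card_of_injOn (· + q)
    (fun i hi => by
      simp only [Finset.coe_filter, Finset.mem_range, Set.mem_ofPred_eq] at hi ⊢
      exact ⟨by omega, hi.2⟩)
    fun i _ j _ h => by simpa using h

lemma le_ncard_add_mul_mismatches (x y : ℕ → Fin k) (n : ℕ) {r : ℕ} {t : ℝ}
    (hr : (1 / 2 : ℝ) ^ r < t) :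
    n ≤ {i | i < n ∧ shiftDist (shift^[i] x) (shift^[i] y) < t}.ncard +
      r * mismatches x y (n + r) := by
  classical
  set good : ℕ → Prop := fun i => ∀ q < r, x (i + q) = y (i + q)
  have hgood : ((Finset.range n).filter good).card ≤
      {i | i < n ∧ shiftDist (shift^[i] x) (shift^[i] y) < t}.ncard := by
    rw [← Set.ncard_coe_finset]
    refine Set.ncard_le_ncard (fun i hi => ?_) ((Set.finite_Iio n).subset fun i hi => hi.1)
    simp only [Finset.coe_filter, Finset.mem_range, Set.mem_ofPred_eq] at hi
    refine ⟨hi.1, (shiftDist_le_half_pow fun q hq => ?_).trans_lt hr⟩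
    simp only [shift_iterate_apply, add_comm q]
    exact hi.2 q hq
  have hbad : ((Finset.range n).filter fun i => ¬ good i).card ≤ r * mismatches x y (n + r) :=
    calc _ ≤ ((Finset.range r).biUnion fun q =>
            (Finset.range n).filter fun i => x (i + q) ≠ y (i + q)).card := by
          refine Finset.card_le_card fun i hi => ?_
          simp only [Finset.mem_filter, Finset.mem_range, good, not_forall] at hi
          obtain ⟨hi, q, hq, hne⟩ := hi
          exact Finset.mem_biUnion.2 ⟨q, Finset.mem_range.2 hq, Finset.mem_filter.2 ⟨by simpa, hne⟩⟩
      _ ≤ ∑ q ∈ Finset.range r, mismatches x y (n + r) :=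
          Finset.card_biUnion_le.trans <| Finset.sum_le_sum fun q hq =>
            card_filter_shifted_ne_le_mismatches x y (Finset.mem_range.1 hq).le
      _ = r * mismatches x y (n + r) := by simp
  have := Finset.card_filter_add_card_filter_not (s := Finset.range n) good
  simp only [Finset.card_range] at this
  omega

end Frequencies

section Lengths

variable {m : ℕ}

def blockLen (m : ℕ) : ℕ → ℕ
  | 0 => m
  | t + 1 => (t + 6) * blockLen m t

def gapLen (m t : ℕ) : ℕ := (t + 4) * blockLen m t

def period (m t : ℕ) : ℕ := blockLen m t + gapLen m t

lemma blockLen_succ (t : ℕ) : blockLen m (t + 1) = period m t + blockLen m t := by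
  simp only [blockLen, period, gapLen]; ring

lemma period_eq (t : ℕ) : period m t = (t + 5) * blockLen m t := by
  simp only [period, gapLen]; ring

lemma blockLen_pos (hm : 0 < m) (t : ℕ) : 0 < blockLen m t := by
  induction t with
  | zero => exact hm
  | succ t ih => exact Nat.mul_pos (by omega) ih

lemma four_pow_mul_le_blockLen (t e : ℕ) : 4 ^ e * blockLen m t ≤ blockLen m (t + e) := by
  induction e with
  | zero => simp
  | succ e ih =>
    calc 4 ^ (e + 1) * blockLen m t = 4 * (4 ^ e * blockLen m t) := by ring
      _ ≤ (t + e + 6) * blockLen m (t + e) := Nat.mul_le_mul (by omega) ih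

lemma blockLen_mono : Monotone (blockLen m) :=
  monotone_nat_of_le_succ fun t => by rw [blockLen_succ]; omega

lemma gapLen_mono : Monotone (gapLen m) :=
  fun _ _ h => Nat.mul_le_mul (by omega) (blockLen_mono h)

lemma lt_blockLen (hm : 0 < m) (t : ℕ) : t < blockLen m t :=
  calc t < 4 ^ t := Nat.lt_pow_self (by norm_num)
    _ ≤ 4 ^ t * blockLen m 0 := Nat.le_mul_of_pos_right _ hm
    _ ≤ blockLen m t := by simpa using four_pow_mul_le_blockLen 0 t

lemma four_pow_succ_le_gapLen (hm : 0 < m) (t : ℕ) : 4 ^ (t + 1) ≤ gapLen m t :=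
  calc 4 ^ (t + 1) ≤ 4 * (4 ^ t * blockLen m 0) := by
        rw [pow_succ, mul_comm _ 4]; exact Nat.mul_le_mul_left _ (Nat.le_mul_of_pos_right _ hm)
    _ ≤ (t + 4) * blockLen m t :=
        Nat.mul_le_mul (by omega) (by simpa using four_pow_mul_le_blockLen 0 t)

lemma sum_range_period_add (t : ℕ) : ∑ s ∈ Finset.range t, period m s + m = blockLen m t := by
  induction t with
  | zero => simp [blockLen]
  | succ t ih => rw [Finset.sum_range_succ, blockLen_succ, ← ih]; ring

lemma sum_period_add_blockLen_le {F : Finset ℕ} {s t : ℕ} (hst : s ≤ t)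
    (hF : F ⊆ Finset.Ico s t) : ∑ x ∈ F, period m x + blockLen m s ≤ blockLen m t := by
  have h := Finset.sum_range_add_sum_Ico (period m) hst
  have hs := sum_range_period_add (m := m) s
  have ht := sum_range_period_add (m := m) t
  have := Finset.sum_le_sum_of_subset (f := period m) hF
  omega

end Lengths

section BlockPoint

variable {α : Type*} {m : ℕ}

/-- `block m w fil t` is the word `B_t` on `[0, blockLen m t)`. -/
def block (m : ℕ) (w fil : ℕ → α) : ℕ → ℕ → α
  | 0, i => w i
  | t + 1, i =>
    if i < blockLen m t then block m w fil t i
    else if i < period m t then fil t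
    else block m w fil t (i - period m t)

/-- Level `i + 1` suffices for coordinate `i` because `i < blockLen m (i + 1)` once `0 < m`. -/
def blockPoint (m : ℕ) (w fil : ℕ → α) (i : ℕ) : α := block m w fil (i + 1) i

variable {w fil : ℕ → α}

lemma block_eq_of_le {s t i : ℕ} (hst : s ≤ t) (hi : i < blockLen m s) :
    block m w fil t i = block m w fil s i := by
  induction t, hst using Nat.le_induction with
  | base => rfl
  | succ t hst ih =>
    rw [block, if_pos (hi.trans_le (blockLen_mono hst)), ih]

lemma blockPoint_eq_block (hm : 0 < m) {t i : ℕ} (hi : i < blockLen m t) :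
    blockPoint m w fil i = block m w fil t i := by
  rcases le_total (i + 1) t with h | h
  · exact (block_eq_of_le h ((Nat.lt_succ_self i).trans (lt_blockLen hm _))).symm
  · exact block_eq_of_le h hi

lemma blockPoint_of_lt (hm : 0 < m) {i : ℕ} (hi : i < m) : blockPoint m w fil i = w i :=
  blockPoint_eq_block (t := 0) hm hi

lemma blockPoint_gap (hm : 0 < m) {t j : ℕ} (hj : j < gapLen m t) :
    blockPoint m w fil (blockLen m t + j) = fil t := by
  rw [blockPoint_eq_block (t := t + 1) hm (by rw [blockLen_succ, period]; omega), block,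
    if_neg (by omega), if_pos (by rw [period]; omega)]

lemma blockPoint_period_add (hm : 0 < m) {t i : ℕ} (hi : i < blockLen m t) :
    blockPoint m w fil (period m t + i) = blockPoint m w fil i := by
  rw [blockPoint_eq_block (t := t + 1) hm (by rw [blockLen_succ]; omega), block,
    if_neg (by rw [period]; omega), if_neg (by omega), Nat.add_sub_cancel_left,
    blockPoint_eq_block hm hi]

lemma blockPoint_sum_period_add (hm : 0 < m) {F : Finset ℕ} {s i : ℕ} (hF : ∀ x ∈ F, s ≤ x)
    (hi : i < blockLen m s) :
    blockPoint m w fil (∑ x ∈ F, period m x + i) = blockPoint m w fil i := by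
  induction F using Finset.induction_on_max with
  | empty => simp
  | insert a F hlt ih =>
    have hsa : s ≤ a := hF a (Finset.mem_insert_self a F)
    have hFa : F ⊆ Finset.Ico s a := fun x hx =>
      Finset.mem_Ico.2 ⟨hF x (Finset.mem_insert_of_mem hx), hlt x hx⟩
    have hlt' : ∑ x ∈ F, period m x + i < blockLen m a := by
      have := sum_period_add_blockLen_le (m := m) hsa hFa; omega
    rw [Finset.sum_insert fun ha => (hlt a ha).false, add_assoc, blockPoint_period_add hm hlt',
      ih fun x hx => hF x (Finset.mem_insert_of_mem hx)]

lemma lt_blockLen_cases {t i : ℕ} (hi : i < blockLen m t) :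
    (∃ F ⊆ Finset.range t, ∃ r < m, i = ∑ x ∈ F, period m x + r) ∨
      ∃ s < t, ∃ F ⊆ Finset.Ico (s + 1) t, ∃ j < gapLen m s,
        i = ∑ x ∈ F, period m x + blockLen m s + j := by
  induction t generalizing i with
  | zero => exact Or.inl ⟨∅, by simp, i, hi, by simp⟩
  | succ t ih =>
    rcases lt_or_ge i (blockLen m t) with h1 | h1
    · rcases ih h1 with ⟨F, hF, r, hr, he⟩ | ⟨s, hs, F, hF, j, hj, he⟩
      · exact Or.inl ⟨F, hF.trans (Finset.range_subset_range.2 t.le_succ), r, hr, he⟩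
      · exact Or.inr ⟨s, hs.trans t.lt_succ_self, F,
          hF.trans (Finset.Ico_subset_Ico_right t.le_succ), j, hj, he⟩
    rcases lt_or_ge i (period m t) with h2 | h2
    · exact Or.inr ⟨t, t.lt_succ_self, ∅, by simp, i - blockLen m t,
        by rw [period] at h2; omega, by rw [Finset.sum_empty]; omega⟩
    obtain ⟨i, rfl⟩ : ∃ i', i = period m t + i' := ⟨i - period m t, by omega⟩
    rw [blockLen_succ] at hi
    rcases ih (by omega : i < blockLen m t) with ⟨F, hF, r, hr, he⟩ | ⟨s, hs, F, hF, j, hj, he⟩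
    · have htF : t ∉ F := fun h => by simpa using hF h
      refine Or.inl ⟨insert t F, ?_, r, hr, by rw [Finset.sum_insert htF]; omega⟩
      exact Finset.insert_subset_iff.2 ⟨by simp, hF.trans (Finset.range_subset_range.2 t.le_succ)⟩
    · have htF : t ∉ F := fun h => by simpa using hF h
      refine Or.inr ⟨s, hs.trans t.lt_succ_self, insert t F, ?_, j, hj,
        by rw [Finset.sum_insert htF]; omega⟩
      exact Finset.insert_subset_iff.2 ⟨Finset.mem_Ico.2 ⟨hs, t.lt_succ_self⟩,
        hF.trans (Finset.Ico_subset_Ico_right t.le_succ)⟩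

lemma blockPoint_sum_period_add_of_lt (hm : 0 < m) (F : Finset ℕ) {r : ℕ} (hr : r < m) :
    blockPoint m w fil (∑ x ∈ F, period m x + r) = w r :=
  (blockPoint_sum_period_add hm (s := 0) (fun _ _ => Nat.zero_le _) hr).trans
    (blockPoint_of_lt hm hr)

lemma blockPoint_sum_period_add_gap (hm : 0 < m) {F : Finset ℕ} {s j : ℕ}
    (hF : ∀ x ∈ F, s < x) (hj : j < gapLen m s) :
    blockPoint m w fil (∑ x ∈ F, period m x + blockLen m s + j) = fil s := by
  rw [add_assoc, blockPoint_sum_period_add hm (s := s + 1) hF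
    (by rw [blockLen_succ, period]; omega), blockPoint_gap hm hj]

def periodSums (m : ℕ) : Set ℕ := {n | ∃ F : Finset ℕ, ∑ x ∈ F, period m x = n}

/-- `w (m - 1)` followed by `m` symbols `fil 0` can only be the end of a copy of the prefix, and
the copies of the prefix start at sums of periods. -/
lemma mem_periodSums_of_window (hm : 0 < m) (hwf : w (m - 1) ≠ fil 0) {n : ℕ}
    (hlast : blockPoint m w fil (n + (m - 1)) = w (m - 1))
    (hgap : ∀ j < m, blockPoint m w fil (n + m + j) = fil 0) : n ∈ periodSums m := by
  rcases lt_blockLen_cases (t := n + m) (i := n + (m - 1)) ((by omega : n + (m - 1) < n + m).trans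
      (lt_blockLen hm _)) with ⟨F, -, r, hr, he⟩ | ⟨s, -, F, hF, j, hj, he⟩
  · rcases eq_or_lt_of_le (Nat.le_sub_one_of_lt hr) with rfl | hr'
    · exact ⟨F, by omega⟩
    · have h := blockPoint_sum_period_add_of_lt (w := w) (fil := fil) hm F (Nat.sub_one_lt_of_lt hm)
      rw [show ∑ x ∈ F, period m x + (m - 1) = n + m + (m - 2 - r) by omega,
        hgap _ (by omega)] at h
      exact absurd h.symm hwf
  · have hF' : ∀ x ∈ F, s < x := fun x hx => (Finset.mem_Ico.1 (hF hx)).1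
    rcases lt_or_ge (j + 1) (gapLen m s) with hj' | hj'
    · have h0 : blockPoint m w fil (n + (m - 1)) = fil s := by
        rw [he]; exact blockPoint_sum_period_add_gap hm hF' hj
      have h1 : blockPoint m w fil (n + m + 0) = fil s := by
        rw [show n + m + 0 = ∑ x ∈ F, period m x + blockLen m s + (j + 1) by omega]
        exact blockPoint_sum_period_add_gap hm hF' hj'
      exact (hwf ((hlast.symm.trans h0).trans (h1.symm.trans (hgap 0 hm)))).elim
    · have hsF : s ∉ F := fun h => (hF' s h).false
      have h := blockPoint_sum_period_add_of_lt (w := w) (fil := fil) hm (insert s F)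
        (Nat.sub_one_lt_of_lt hm)
      rw [Finset.sum_insert hsF, show period m s + ∑ x ∈ F, period m x + (m - 1) =
        n + m + (m - 1) by rw [period]; omega, hgap _ (Nat.sub_one_lt_of_lt hm)] at h
      exact (hwf h.symm).elim

end BlockPoint

section PeriodSums

variable {m : ℕ}

lemma sum_period_add_gapLen_le {A B : Finset ℕ} {n t : ℕ} (hnt : n ≤ t)
    (hB : B ⊆ Finset.Ico n t) (ht : t ∈ A) :
    ∑ x ∈ B, period m x + gapLen m n ≤ ∑ x ∈ A, period m x := by
  have h1 := sum_period_add_blockLen_le (m := m) hnt hB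
  have h2 := Finset.single_le_sum (f := period m) (fun _ _ => Nat.zero_le _) ht
  have h3 := gapLen_mono (m := m) hnt
  rw [period] at h2
  omega

lemma eq_of_sum_period_close {A B : Finset ℕ} {n : ℕ} (hA : ∀ x ∈ A, n ≤ x)
    (hB : ∀ x ∈ B, n ≤ x) (hAB : ∑ x ∈ A, period m x < ∑ x ∈ B, period m x + gapLen m n)
    (hBA : ∑ x ∈ B, period m x < ∑ x ∈ A, period m x + gapLen m n) : A = B := by
  obtain ⟨t, ht⟩ := Finset.exists_nat_subset_range (A ∪ B)
  induction t generalizing A B with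
  | zero => simp_all
  | succ t ih =>
    have hlt : ∀ C ⊆ A ∪ B, t ∉ C → ∀ x ∈ C, x < t := fun C hC htC x hx =>
      lt_of_le_of_ne (Nat.lt_succ_iff.1 (Finset.mem_range.1 (ht (hC hx)))) fun h => htC (h ▸ hx)
    by_cases htA : t ∈ A <;> by_cases htB : t ∈ B
    · rw [← Finset.add_sum_erase _ _ htA, ← Finset.add_sum_erase _ _ htB] at hAB hBA
      rw [← Finset.insert_erase htA, ← Finset.insert_erase htB,
        ih (A := A.erase t) (B := B.erase t) (fun x hx => hA x (Finset.mem_of_mem_erase hx))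
          (fun x hx => hB x (Finset.mem_of_mem_erase hx)) (by omega) (by omega)]
      rw [← Finset.erase_union_distrib]
      exact fun x hx => Finset.mem_range.2 <|
        hlt _ (Finset.erase_subset _ _) (Finset.notMem_erase _ _) x hx
    · have := sum_period_add_gapLen_le (m := m) (hA t htA) (fun x hx => Finset.mem_Ico.2
        ⟨hB x hx, hlt B Finset.subset_union_right htB x hx⟩) htA
      omega
    · have := sum_period_add_gapLen_le (m := m) (hB t htB) (fun x hx => Finset.mem_Ico.2
        ⟨hA x hx, hlt A Finset.subset_union_left htA x hx⟩) htB
      omega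
    · exact ih hA hB hAB hBA fun x hx => Finset.mem_range.2 <|
        hlt _ subset_rfl (by simp [htA, htB]) x hx

lemma ncard_periodSums_inter_Ico_le {n N : ℕ} (hN : N ≤ gapLen m n) (b : ℕ) :
    (periodSums m ∩ Set.Ico b (b + N)).ncard ≤ 2 ^ n := by
  classical
  have hex : ∀ q ∈ periodSums m ∩ Set.Ico b (b + N), ∃ F : Finset ℕ, ∑ x ∈ F, period m x = q :=
    fun q hq => hq.1
  choose! F hF using hex
  have hsplit : ∀ q ∈ periodSums m ∩ Set.Ico b (b + N),
      ∑ x ∈ (F q).filter (· < n), period m x + ∑ x ∈ (F q).filter (¬ · < n), period m x = q :=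
    fun q hq => (Finset.sum_filter_add_sum_filter_not _ _ _).trans (hF q hq)
  calc (periodSums m ∩ Set.Ico b (b + N)).ncard
      ≤ ((Finset.range n).powerset : Set (Finset ℕ)).ncard := by
        refine Set.ncard_le_ncard_of_injOn (fun q => (F q).filter (· < n)) ?_ ?_
          (Finset.finite_toSet _)
        · intro q _
          exact Finset.mem_coe.2 (Finset.mem_powerset.2 fun x hx =>
            Finset.mem_range.2 (Finset.mem_filter.1 hx).2)
        · intro q hq q' hq' hqq'
          have e := hsplit q hq
          have e' := hsplit q' hq'
          have hlow : ∑ x ∈ (F q).filter (· < n), period m x =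
              ∑ x ∈ (F q').filter (· < n), period m x := congrArg (∑ x ∈ ·, period m x) hqq'
          have hI := hq.2; have hI' := hq'.2
          simp only [Set.mem_Ico] at hI hI'
          have hhigh := congrArg (∑ x ∈ ·, period m x) <| eq_of_sum_period_close (m := m) (n := n)
            (A := (F q).filter fun x => ¬ x < n) (B := (F q').filter fun x => ¬ x < n)
            (fun x hx => not_lt.1 (Finset.mem_filter.1 hx).2)
            (fun x hx => not_lt.1 (Finset.mem_filter.1 hx).2) (by omega) (by omega)
          omega
    _ = 2 ^ n := by rw [Set.ncard_coe_finset, Finset.card_powerset, Finset.card_range]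

lemma tendsto_natLog_atTop {b : ℕ} (hb : 1 < b) : Tendsto (Nat.log b) atTop atTop :=
  tendsto_atTop_atTop.2 fun j => ⟨b ^ j, fun N hN =>
    (Nat.le_log_iff_pow_le hb ((pow_pos (by omega) j).trans_le hN).ne').2 hN⟩

lemma banachUpperDensity_eq_zero (hm : 0 < m) {V : Set ℕ} (hV : V ⊆ periodSums m) :
    banachUpperDensity V = 0 := by
  set f : ℕ → ℝ := fun N => ⨆ a : ℕ, ((V ∩ Set.Ico a (a + N)).ncard : ℝ) / N
  have hf0 : ∀ N, 0 ≤ f N := fun N => Real.iSup_nonneg fun a => by positivity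
  have hf : ∀ N, 1 ≤ N → f N ≤ (1 / 2) ^ Nat.log 4 N := fun N hN => ciSup_le fun a => by
    set n := Nat.log 4 N
    have hlow : 4 ^ n ≤ N := Nat.pow_log_le_self 4 (by omega)
    have hgap : N ≤ gapLen m n :=
      (Nat.lt_pow_succ_log_self (by norm_num) N).le.trans (four_pow_succ_le_gapLen hm n)
    have hcard : (V ∩ Set.Ico a (a + N)).ncard ≤ 2 ^ n :=
      (Set.ncard_le_ncard (Set.inter_subset_inter_left _ hV)
        ((Set.finite_Ico a (a + N)).subset Set.inter_subset_right)).trans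
        (ncard_periodSums_inter_Ico_le hgap a)
    calc ((V ∩ Set.Ico a (a + N)).ncard : ℝ) / N ≤ (2 ^ n : ℝ) / 4 ^ n := by
          gcongr
          · exact_mod_cast hcard
          · exact_mod_cast hlow
      _ = (1 / 2) ^ n := by rw [← div_pow]; norm_num
  have hlim : Tendsto f atTop (𝓝 0) :=
    tendsto_of_tendsto_of_tendsto_of_le_of_le' tendsto_const_nhds
      ((tendsto_pow_atTop_nhds_zero_of_lt_one (by norm_num) (by norm_num)).comp
        (tendsto_natLog_atTop (by norm_num)))
      (.of_forall hf0) (eventually_ge_atTop 1 |>.mono hf)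
  exact hlim.limsup_eq

end PeriodSums

section Dynamics

variable {k m : ℕ}

lemma blockPoint_recurrent (hm : 0 < m) (w fil : ℕ → Fin k) : Recurrent (blockPoint m w fil) := by
  intro ε hε
  obtain ⟨t, ht⟩ := exists_pow_lt_of_lt_one hε (by norm_num : (1 / 2 : ℝ) < 1)
  refine ⟨period m t, by rw [period_eq]; exact Nat.mul_pos (by omega) (blockLen_pos hm t), ?_⟩
  refine ((shiftDist_le_half_pow (L := blockLen m t) fun i hi => ?_).trans ?_).trans_lt ht
  · rw [shift_iterate_apply, add_comm, blockPoint_period_add hm hi]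
  · exact pow_le_pow_of_le_one (by norm_num) (by norm_num) (lt_blockLen hm t).le

lemma visits_subset_periodSums (hm : 0 < m) {w fil : ℕ → Fin k} (hwf : w (m - 1) ≠ fil 0) :
    visits (blockPoint m w fil) (sball (blockPoint m w fil) ((1 / 2) ^ (2 * m))) ⊆
      periodSums m := by
  rintro n ⟨-, hn⟩
  have hagree : ∀ i < 2 * m, blockPoint m w fil (n + i) = blockPoint m w fil i := fun i hi => by
    rw [add_comm, ← shift_iterate_apply n (blockPoint m w fil)]
    exact (eq_of_shiftDist_lt_half_pow hn hi).symm
  refine mem_periodSums_of_window hm hwf ?_ fun j hj => ?_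
  · rw [hagree _ (by omega), blockPoint_of_lt hm (by omega)]
  · rw [add_assoc, hagree _ (by omega)]
    exact blockPoint_gap (t := 0) hm (by simp only [gapLen, blockLen]; omega)

lemma blockPoint_not_banachRecurrent (hm : 0 < m) {w fil : ℕ → Fin k}
    (hwf : w (m - 1) ≠ fil 0) : ¬ BanachRecurrent (blockPoint m w fil) := fun h =>
  (h _ (by positivity)).ne' (banachUpperDensity_eq_zero hm (visits_subset_periodSums hm hwf))

lemma PhiN_period_le (hm : 0 < m) {w w' fil fil' : ℕ → Fin k} {t : ℕ} (hfil : fil t ≠ fil' t) :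
    PhiN (blockPoint m w fil) (blockPoint m w' fil') (period m t) (1 / 2) ≤ 1 / (t + 5) := by
  refine (PhiN_le_div (a := blockLen m t) fun i hi hti => ?_).trans_eq ?_
  · obtain ⟨j, rfl⟩ : ∃ j, i = blockLen m t + j := ⟨i - blockLen m t, by omega⟩
    have hj : j < gapLen m t := by rw [period] at hi; omega
    have h := half_pow_le_shiftDist (j := 0) (x := shift^[blockLen m t + j] (blockPoint m w fil))
      (y := shift^[blockLen m t + j] (blockPoint m w' fil'))
      (by simpa [shift_iterate_apply, blockPoint_gap hm hj] using hfil)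
    simpa using h
  · have := blockLen_pos hm t
    rw [period_eq]; push_cast; field_simp

lemma mismatches_blockLen_succ_le (hm : 0 < m) {w fil fil' : ℕ → Fin k} {t : ℕ}
    (hfil : fil t = fil' t) :
    mismatches (blockPoint m w fil) (blockPoint m w fil') (blockLen m (t + 1)) ≤
      2 * mismatches (blockPoint m w fil) (blockPoint m w fil') (blockLen m t) := by
  have hgap : ((Finset.range (gapLen m t)).filter fun j => blockPoint m w fil (blockLen m t + j)
      ≠ blockPoint m w fil' (blockLen m t + j)) = ∅ :=
    Finset.filter_false_of_mem fun j hj => by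
      rw [blockPoint_gap hm (Finset.mem_range.1 hj), blockPoint_gap hm (Finset.mem_range.1 hj),
        hfil, not_not]
  have hcopy : ((Finset.range (blockLen m t)).filter fun i => blockPoint m w fil (period m t + i)
      ≠ blockPoint m w fil' (period m t + i)).card =
      mismatches (blockPoint m w fil) (blockPoint m w fil') (blockLen m t) :=
    congrArg Finset.card <| Finset.filter_congr fun i hi => by
      rw [blockPoint_period_add hm (Finset.mem_range.1 hi),
        blockPoint_period_add hm (Finset.mem_range.1 hi)]
  rw [blockLen_succ, mismatches_add, period, mismatches_add, hgap, ← period, hcopy,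
    Finset.card_empty]
  omega

lemma mismatches_blockLen_add_le (hm : 0 < m) {w fil fil' : ℕ → Fin k} {t e : ℕ}
    (hfil : ∀ s, t ≤ s → s < t + e → fil s = fil' s) :
    mismatches (blockPoint m w fil) (blockPoint m w fil') (blockLen m (t + e)) ≤
      2 ^ e * blockLen m t := by
  induction e with
  | zero => simpa using mismatches_le _ _ _
  | succ e ih =>
    calc _ ≤ 2 * mismatches (blockPoint m w fil) (blockPoint m w fil') (blockLen m (t + e)) :=
          mismatches_blockLen_succ_le hm (hfil _ (by omega) (by omega))
      _ ≤ 2 * (2 ^ e * blockLen m t) :=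
          Nat.mul_le_mul_left _ (ih fun s h1 h2 => hfil s h1 (by omega))
      _ = 2 ^ (e + 1) * blockLen m t := by ring

lemma one_sub_le_PhiN_blockLen (hm : 0 < m) {w fil fil' : ℕ → Fin k} {t e r : ℕ} {τ : ℝ}
    (hfil : ∀ s, t ≤ s → s < t + e → fil s = fil' s) (hr : (1 / 2 : ℝ) ^ r < τ) :
    1 - r * (r + 1) / 2 ^ e ≤
      PhiN (blockPoint m w fil) (blockPoint m w fil') (blockLen m (t + e)) τ := by
  set x := blockPoint m w fil
  set y := blockPoint m w fil'
  set n := blockLen m (t + e)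
  have hclose := le_ncard_add_mul_mismatches x y n hr
  have hU := blockLen_pos hm t
  have hgrowth : 4 ^ e * blockLen m t ≤ n := four_pow_mul_le_blockLen t e
  have hmis : mismatches x y (n + r) ≤ (r + 1) * (2 ^ e * blockLen m t) := by
    have h1 := mismatches_blockLen_add_le hm hfil (w := w)
    have h2 := mismatches_add_le x y n r
    have h3 : 1 ≤ 2 ^ e * blockLen m t := Nat.one_le_iff_ne_zero.2 (by positivity)
    nlinarith
  have key : r * mismatches x y (n + r) * 2 ^ e ≤ r * (r + 1) * n := by
    calc r * mismatches x y (n + r) * 2 ^ e ≤ r * ((r + 1) * (2 ^ e * blockLen m t)) * 2 ^ e :=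
          by gcongr
      _ = r * (r + 1) * (4 ^ e * blockLen m t) := by
          rw [show (4 : ℕ) ^ e = 2 ^ e * 2 ^ e by rw [← mul_pow]; norm_num]; ring
      _ ≤ r * (r + 1) * n := by gcongr
  have hn : (0 : ℝ) < n := by exact_mod_cast (blockLen_pos hm _)
  have hclose' : (n : ℝ) ≤ {i | i < n ∧ shiftDist (shift^[i] x) (shift^[i] y) < τ}.ncard +
      r * mismatches x y (n + r) := by exact_mod_cast hclose
  have key' : (r * mismatches x y (n + r) * 2 ^ e : ℝ) ≤ r * (r + 1) * n := by exact_mod_cast key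
  calc (1 : ℝ) - r * (r + 1) / 2 ^ e ≤ 1 - (r * mismatches x y (n + r) : ℝ) / n := by
        gcongr 1 - ?_
        rw [div_le_div_iff₀ hn (by positivity)]; linarith
    _ ≤ PhiN x y n τ := by
        rw [PhiN, one_sub_div hn.ne']; gcongr; linarith

end Dynamics

section Family

variable {k : ℕ}

def bitSymbol (hk : 2 ≤ k) (b : Bool) : Fin k := ⟨b.toNat, by cases b <;> simp <;> omega⟩

lemma bitSymbol_injective (hk : 2 ≤ k) : Function.Injective (bitSymbol hk) := by
  intro a b h; cases a <;> cases b <;> simp_all [bitSymbol, Fin.ext_iff]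

/-- Level `t = 2 ^ l` carries the bit `c (unpair l).1`, so every bit of `c` is repeated at
infinitely many levels, and every other level carries `false`. -/
def code (c : ℕ → Bool) (t : ℕ) : Bool :=
  decide (2 ^ Nat.log 2 t = t) && c (Nat.unpair (Nat.log 2 t)).1

lemma code_zero (c : ℕ → Bool) : code c 0 = false := by simp [code]

lemma code_two_pow (c : ℕ → Bool) (l : ℕ) : code c (2 ^ l) = c (Nat.unpair l).1 := by
  simp [code, Nat.log_pow]

lemma code_eq_false (c : ℕ → Bool) {l t : ℕ} (h₁ : 2 ^ l < t) (h₂ : t < 2 ^ (l + 1)) :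
    code c t = false := by
  simp [code, Nat.log_eq_of_pow_le_of_lt_pow h₁.le h₂, h₁.ne]

lemma exists_code_ne {c c' : ℕ → Bool} (h : c ≠ c') (R : ℕ) :
    ∃ t, R ≤ t ∧ code c t ≠ code c' t := by
  obtain ⟨j, hj⟩ := Function.ne_iff.1 h
  refine ⟨2 ^ Nat.pair j R, ?_, by simpa [code_two_pow] using hj⟩
  exact (Nat.right_le_pair j R).trans (Nat.lt_two_pow_self).le

def familyPoint (hk : 2 ≤ k) (c : ℕ → Bool) : ℕ → Fin k :=
  blockPoint 1 (fun _ => bitSymbol hk true) (bitSymbol hk ∘ code c)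

lemma familyPoint_recurrent (hk : 2 ≤ k) (c : ℕ → Bool) : Recurrent (familyPoint hk c) :=
  blockPoint_recurrent one_pos _ _

lemma familyPoint_not_banachRecurrent (hk : 2 ≤ k) (c : ℕ → Bool) :
    ¬ BanachRecurrent (familyPoint hk c) :=
  blockPoint_not_banachRecurrent one_pos <| by
    simpa [code_zero] using (bitSymbol_injective hk).ne (by decide : true ≠ false)

lemma familyPoint_injective (hk : 2 ≤ k) : Function.Injective (familyPoint hk) := by
  intro c c' h
  by_contra hcc
  obtain ⟨t, -, ht⟩ := exists_code_ne hcc 0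
  have key : ∀ c, familyPoint hk c (blockLen 1 t + 0) = bitSymbol hk (code c t) := fun c =>
    blockPoint_gap one_pos (Nat.mul_pos (by omega) (blockLen_pos one_pos t))
  exact ht (bitSymbol_injective hk ((key c).symm.trans ((congrFun h _).trans (key c'))))

lemma familyPoint_liminf_PhiN (hk : 2 ≤ k) {c c' : ℕ → Bool} (h : c ≠ c') :
    liminf (fun n => PhiN (familyPoint hk c) (familyPoint hk c') n (1 / 2)) atTop = 0 := by
  choose t ht hne using exists_code_ne h
  refine liminf_eq_zero_of_tendsto (PhiN_nonneg _ _ · _) (PhiN_le_one _ _ · _)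
    (φ := fun R => period 1 (t R)) ?_ tendsto_one_div_add_atTop_nhds_zero_nat fun R => ?_
  · refine tendsto_atTop_mono (fun R => (ht R).trans ?_) tendsto_id
    rw [period_eq]; exact (lt_blockLen one_pos _).le.trans (Nat.le_mul_of_pos_left _ (by omega))
  · refine (PhiN_period_le one_pos ((bitSymbol_injective hk).ne (hne R))).trans ?_
    gcongr
    · exact_mod_cast ht R
    · norm_num

lemma familyPoint_limsup_PhiN (hk : 2 ≤ k) (c c' : ℕ → Bool) {τ : ℝ} (hτ : 0 < τ) :
    limsup (fun n => PhiN (familyPoint hk c) (familyPoint hk c') n τ) atTop = 1 := by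
  obtain ⟨r, hr⟩ := exists_pow_lt_of_lt_one hτ (by norm_num : (1 / 2 : ℝ) < 1)
  refine limsup_eq_one_of_tendsto (PhiN_nonneg _ _ · _) (PhiN_le_one _ _ · _)
    (φ := fun e => blockLen 1 (2 ^ e + 1 + e)) ?_
    (tendsto_const_nhds.div_atTop (tendsto_pow_atTop_atTop_of_one_lt one_lt_two))
    fun e => one_sub_le_PhiN_blockLen one_pos (fun s h₁ h₂ => ?_) hr
  · exact tendsto_atTop_mono (fun e => (Nat.le_add_left e _).trans
      (lt_blockLen one_pos _).le) tendsto_id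
  · have he : e < 2 ^ e := Nat.lt_two_pow_self
    have h₂' : s < 2 ^ (e + 1) := by rw [pow_succ]; omega
    simp [code_eq_false c (l := e) (by omega) h₂', code_eq_false c' (l := e) (by omega) h₂']

lemma shiftDense_recurrent_not_banachRecurrent (hk : 2 ≤ k) :
    ShiftDense {x : ℕ → Fin k | Recurrent x ∧ ¬ BanachRecurrent x} := by
  intro x ε hε
  obtain ⟨L, hL⟩ := exists_pow_lt_of_lt_one hε (by norm_num : (1 / 2 : ℝ) < 1)
  set w : ℕ → Fin k := fun i => if i < L then x i else bitSymbol hk true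
  refine ⟨blockPoint (L + 1) w fun _ => bitSymbol hk false, ⟨blockPoint_recurrent L.succ_pos _ _,
    blockPoint_not_banachRecurrent L.succ_pos ?_⟩, ?_⟩
  · simpa [w] using (bitSymbol_injective hk).ne (by decide : true ≠ false)
  · refine (shiftDist_le_half_pow fun i hi => ?_).trans_lt hL
    rw [blockPoint_of_lt L.succ_pos (by omega)]
    simp [w, hi]

lemma not_countable_range_familyPoint (hk : 2 ≤ k) : ¬ (Set.range (familyPoint hk)).Countable := by
  have : Uncountable (ℕ → Bool) := by
    rw [← Cardinal.aleph0_lt_mk_iff]; simpa using Cardinal.aleph0_lt_continuum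
  exact fun h => Set.not_countable_univ (by simpa using h.preimage (familyPoint_injective hk))

lemma dc1Scrambled_range_familyPoint (hk : 2 ≤ k) : DC1Scrambled (Set.range (familyPoint hk)) := by
  refine ⟨⟨_, ⟨fun _ => false, rfl⟩, _, ⟨fun _ => true, rfl⟩, (familyPoint_injective hk).ne
    fun h => by simpa using congrFun h 0⟩, ?_⟩
  rintro _ ⟨c, rfl⟩ _ ⟨c', rfl⟩ hne
  exact ⟨⟨1 / 2, by norm_num, familyPoint_liminf_PhiN hk fun h => hne (h ▸ rfl)⟩,
    fun τ hτ => familyPoint_limsup_PhiN hk c c' hτ⟩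

end Family

end FullShift

open FullShift in
theorem recurrent_not_banachRecurrent_dense_and_DC1 (k : ℕ) (hk : 2 ≤ k) :
    ShiftDense {x : ℕ → Fin k | Recurrent x ∧ ¬ BanachRecurrent x} ∧
    ∃ S : Set (ℕ → Fin k), S ⊆ {x | Recurrent x ∧ ¬ BanachRecurrent x} ∧
      ¬ S.Countable ∧ DC1Scrambled S := by
  refine ⟨shiftDense_recurrent_not_banachRecurrent hk, Set.range (familyPoint hk), ?_,
    not_countable_range_familyPoint hk, dc1Scrambled_range_familyPoint hk⟩
  rintro _ ⟨c, rfl⟩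
  exact ⟨familyPoint_recurrent hk c, familyPoint_not_banachRecurrent hk c⟩
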